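/- In the canonical system associated with 𝒜_C, every Collatz trajectory is reached: for any positive integer n, the trajectory starting from N = n · 2^{(⌈log₄ n⌉+1)(⌈log₄ n⌉+2)} = n · ∏_{i=0}^{⌈log₄ n⌉} b_i attains the value n at step ⌈log₄ n⌉ + 1, i.e. n_{⌈log₄ n⌉+1} = n where n_0 = N and n_{j+1} = f_j(n_j). -/
import Mathlib


/-- The bases of the canonical collection `𝒜_C`: `b_i = 4^(i+1)`. -/
def bC (i : ℕ) : ℤ := 4 ^ (i + 1)

/-- The modified Collatz map: `g 0 = 0`, `g 1 = 0`, `g j = j/2` for even `j`,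
and `g j = 3j + 1` for odd `j > 1`. -/
def gC (j : ℤ) : ℤ := if j = 1 then 0 else if 2 ∣ j then j / 2 else 3 * j + 1

/-- The canonical system maps of `𝒜_C`: `f_i(n) = (n - t_i(n)) / b_i`, where
`t_i(n) = r - b_i · g(r)` with `r = n mod b_i ∈ [0, b_i)` is the unique element of
`T_i` congruent to `n` modulo `b_i`. -/
def fC (i : ℕ) (n : ℤ) : ℤ := (n - Int.emod n (bC i)) / bC i + gC (Int.emod n (bC i))

/-- The trajectory of `n` in the canonical system of `𝒜_C`:
`n_0 = n`, `n_{i+1} = f_i(n_i)`. -/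
def trajC (n : ℤ) : ℕ → ℤ
  | 0 => n
  | i + 1 => fC i (trajC n i)

lemma fC_mul_bC (i : ℕ) (m : ℤ) : fC i (m * bC i) = m := by
  have h0 : Int.emod (m * bC i) (bC i) = 0 := Int.mul_emod_left m (bC i)
  have hb : (bC i) ≠ 0 := by
    have : (0:ℤ) < bC i := by unfold bC; positivity
    exact this.ne'
  simp [fC, h0, gC, Int.mul_ediv_cancel _ hb]

lemma traj_key (n : ℤ) (L : ℕ) : ∀ j, j ≤ L + 1 →
    trajC (n * 2 ^ ((L + 1) * (L + 2))) j = n * 2 ^ ((L + 1) * (L + 2) - j * (j + 1)) := by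
  intro j
  induction j with
  | zero => intro _; simp [trajC]
  | succ k ih =>
    intro hj
    have hk : k ≤ L + 1 := by omega
    have h1 : (k + 1) * (k + 2) ≤ (L + 1) * (L + 2) :=
      Nat.mul_le_mul (by omega) (by omega)
    have h2 : (k + 1) * (k + 2) = k * (k + 1) + 2 * (k + 1) := by ring
    have hE : (L + 1) * (L + 2) - k * (k + 1)
        = ((L + 1) * (L + 2) - (k + 1) * (k + 2)) + 2 * (k + 1) := by omega
    have hE2 : (L + 1) * (L + 2) - (k + 1) * ((k + 1) + 1)
        = (L + 1) * (L + 2) - (k + 1) * (k + 2) := by ring_nf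
    rw [trajC, ih hk, hE, pow_add]
    have h4 : (2:ℤ) ^ (2 * (k + 1)) = bC k := by
      unfold bC; rw [pow_mul]; norm_num
    rw [h4, ← mul_assoc, fC_mul_bC, hE2]

theorem trajC_reaches_collatz (n : ℕ) (hn : 0 < n) (L : ℕ) (hL : L = Nat.clog 4 n) :
    trajC ((n : ℤ) * 2 ^ ((L + 1) * (L + 2))) (L + 1) = (n : ℤ) := by
  have := traj_key (n : ℤ) L (L + 1) le_rfl
  rw [this]
  have : (L + 1) * (L + 2) - (L + 1) * ((L + 1) + 1) = 0 := by
    have : (L + 1) * ((L + 1) + 1) = (L + 1) * (L + 2) := by ring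
    omega
  rw [this, pow_zero, mul_one]
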